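/- arXiv:0810.4028 — 4 statements merged into one kernel-verified Lean document; each statement's English description precedes it below -/
import Mathlib

section
/- The R-module F^{[2]}((a,b)⊗(c,d)) of double Fibonacci sequences in R of type (a,b)⊗(c,d) is free of rank 4, with basis the four sequences (P_i⁽ⁿ⁾(a,b)·P_j⁽ᵏ⁾(c,d))_{n,k≥0} for (i,j) ∈ {0,1}². -/
variable {R : Type*} [CommRing R]

/-- The solution of `x (n+2) = a * x (n+1) + b * x n` with initial values `p, q`. -/
def fibP (a b p q : R) : ℕ → R
  | 0 => p
  | 1 => q
  | (n + 2) => a * fibP a b p q (n + 1) + b * fibP a b p q n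

/-- `F^{[2]}((a,b)⊗(c,d))`: the `R`-module of double Fibonacci sequences in `R`. -/
def fib2Submodule (R : Type*) [CommRing R] (a b c d : R) :
    Submodule R (ℕ → ℕ → R) where
  carrier := {x | (∀ n k, x (n + 2) k = a * x (n + 1) k + b * x n k) ∧
    (∀ n k, x n (k + 2) = c * x n (k + 1) + d * x n k)}
  add_mem' := by
    rintro x y ⟨hx1, hx2⟩ ⟨hy1, hy2⟩
    constructor <;> intro n k <;>
      simp only [Pi.add_apply, hx1 n k, hy1 n k, hx2 n k, hy2 n k] <;> ring
  zero_mem' := by constructor <;> intro n k <;> simp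
  smul_mem' := by
    rintro e x ⟨hx1, hx2⟩
    constructor <;> intro n k <;>
      simp only [Pi.smul_apply, hx1 n k, hx2 n k, smul_eq_mul] <;> ring

/-- Any sequence satisfying the recurrence equals `fibP` of its initial values. -/
lemma fibP_eq (a b : R) (f : ℕ → R) (hf : ∀ n, f (n + 2) = a * f (n + 1) + b * f n) :
    ∀ n, f n = fibP a b (f 0) (f 1) n := by
  intro n
  induction n using Nat.strong_induction_on with
  | _ n ih =>
    match n with
    | 0 => rfl
    | 1 => rfl
    | (m + 2) =>
      rw [hf m, ih (m + 1) (by omega), ih m (by omega)]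
      simp [fibP]

/-- `fibP` is linear in the initial values. -/
lemma fibP_linear (a b s t p q p' q' : R) :
    ∀ n, fibP a b (s * p + t * p') (s * q + t * q') n
      = s * fibP a b p q n + t * fibP a b p' q' n := by
  intro n
  induction n using Nat.strong_induction_on with
  | _ n ih =>
    match n with
    | 0 => rfl
    | 1 => rfl
    | (m + 2) =>
      simp only [fibP, ih (m + 1) (by omega), ih m (by omega)]
      ring

lemma fibP_smul (a b e p q : R) (n : ℕ) :
    fibP a b (e * p) (e * q) n = e * fibP a b p q n := by
  have := fibP_linear a b e 0 p q 0 0 n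
  simpa using this

lemma fibP_zero (a b : R) (n : ℕ) : fibP a b 0 0 n = 0 := by
  simpa using fibP_smul a b 0 0 0 n

/-- The evaluation-at-initial-values linear equivalence. -/
def fib2Equiv (a b c d : R) : (fib2Submodule R a b c d) ≃ₗ[R] (Fin 2 × Fin 2 → R) where
  toFun x := fun p => (x : ℕ → ℕ → R) p.1 p.2
  map_add' x y := rfl
  map_smul' e x := rfl
  invFun v := ⟨fun n k =>
      fibP c d (fibP a b (v (0, 0)) (v (1, 0)) n) (fibP a b (v (0, 1)) (v (1, 1)) n) k, by
    constructor
    · intro n k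
      simp only [fibP]
      exact fibP_linear c d a b _ _ _ _ k
    · intro n k
      rfl⟩
  left_inv := by
    rintro ⟨x, hx1, hx2⟩
    ext n k
    have h0 : x n 0 = fibP a b (x 0 0) (x 1 0) n := fibP_eq a b (fun m => x m 0) (fun m => hx1 m 0) n
    have h1 : x n 1 = fibP a b (x 0 1) (x 1 1) n := fibP_eq a b (fun m => x m 1) (fun m => hx1 m 1) n
    have h2 : x n k = fibP c d (x n 0) (x n 1) k := fibP_eq c d (x n) (hx2 n) k
    simp only [h2, h0, h1]
    rfl
  right_inv := by
    intro v
    ext ⟨i, j⟩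
    fin_cases i <;> fin_cases j <;> simp [fibP]

lemma fib2Equiv_symm_single (a b c d : R) (i j : Fin 2) (n k : ℕ) :
    ((fib2Equiv a b c d).symm (Function.update (0 : Fin 2 × Fin 2 → R) (i, j) 1) : ℕ → ℕ → R) n k
      = fibP a b (if i = 0 then 1 else 0) (if i = 1 then 1 else 0) n
        * fibP c d (if j = 0 then 1 else 0) (if j = 1 then 1 else 0) k := by
  show fibP c d _ _ k = _
  fin_cases i <;> fin_cases j <;>
    simp only [Function.update, Fin.isValue, Prod.mk.injEq] <;>
    norm_num <;>
    rw [fibP_zero] <;>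
    [skip; (have := fibP_smul c d (fibP a b 1 0 n) 0 1 k);
     (have := fibP_smul c d (fibP a b 0 1 n) 1 0 k);
     (have := fibP_smul c d (fibP a b 0 1 n) 0 1 k)]
  · have := fibP_smul c d (fibP a b 1 0 n) 1 0 k
    simpa using this
  all_goals simpa using this

/-- `F^{[2]}((a,b)⊗(c,d))` is free of rank 4, with basis the four
products of the fundamental solutions of the two single recurrences. -/
theorem double_fib_free_rank_four (a b c d : R) :
    ∃ B : Module.Basis (Fin 2 × Fin 2) R (fib2Submodule R a b c d),
      (∀ n k, (B (0, 0) : ℕ → ℕ → R) n k = fibP a b 1 0 n * fibP c d 1 0 k) ∧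
      (∀ n k, (B (1, 0) : ℕ → ℕ → R) n k = fibP a b 0 1 n * fibP c d 1 0 k) ∧
      (∀ n k, (B (0, 1) : ℕ → ℕ → R) n k = fibP a b 1 0 n * fibP c d 0 1 k) ∧
      (∀ n k, (B (1, 1) : ℕ → ℕ → R) n k = fibP a b 0 1 n * fibP c d 0 1 k) := by
  refine ⟨Module.Basis.ofEquivFun (fib2Equiv a b c d), ?_, ?_, ?_, ?_⟩ <;> intro n k <;>
    rw [Module.Basis.coe_ofEquivFun] <;>
    exact (fib2Equiv_symm_single a b c d _ _ n k).trans (by simp)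
end

section
/- The two-variable generating function G(t,s) = Σ x_{n,k} tⁿ sᵏ of a double Fibonacci sequence of type (a,b)⊗(c,d) satisfies q(t)·r(s)·G(t,s) = x_{0,0}(1−at)(1−cs) + x_{1,0}·t(1−cs) + x_{0,1}(1−at)s + x_{1,1}·ts, where q(t)=1−at−bt² and r(s)=1−cs−ds². -/
open MvPowerSeries

/-- the two-variable generating function `G(t,s) = Σ x_{n,k} tⁿ sᵏ`
of a double Fibonacci sequence of type `(a,b)⊗(c,d)` satisfies
`q(t)·r(s)·G(t,s) = x₀₀(1-at)(1-cs) + x₁₀ t(1-cs) + x₀₁ (1-at)s + x₁₁ ts`. -/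
theorem double_fib_generating_function (R : Type*) [CommRing R] (a b c d : R)
    (x : ℕ → ℕ → R)
    (hH : ∀ n k, x (n + 2) k = a * x (n + 1) k + b * x n k)
    (hV : ∀ n k, x n (k + 2) = c * x n (k + 1) + d * x n k) :
    let t : MvPowerSeries (Fin 2) R := MvPowerSeries.X 0
    let s : MvPowerSeries (Fin 2) R := MvPowerSeries.X 1
    let C := MvPowerSeries.C (σ := Fin 2) (R := R)
    -- `G(t,s) = Σ_{n,k} x_{n,k} tⁿ sᵏ`
    let G : MvPowerSeries (Fin 2) R := fun m => x (m 0) (m 1)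
    (1 - C a * t - C b * t ^ 2) * (1 - C c * s - C d * s ^ 2) * G =
      C (x 0 0) * (1 - C a * t) * (1 - C c * s) + C (x 1 0) * t * (1 - C c * s) +
      C (x 0 1) * (1 - C a * t) * s + C (x 1 1) * t * s := by
  intro t s C G
  have hmon : ∀ (r : R) (i j : ℕ), C r * t ^ i * s ^ j =
      monomial (Finsupp.single 0 i + Finsupp.single 1 j) r := by
    intro r i j
    show MvPowerSeries.C (σ := Fin 2) (R := R) r * MvPowerSeries.X 0 ^ i * MvPowerSeries.X 1 ^ j = _
    rw [X_pow_eq, X_pow_eq, ← monomial_zero_eq_C_apply, monomial_mul_monomial,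
      monomial_mul_monomial, mul_one, mul_one, zero_add]
  ext m
  have hle : ∀ i j : ℕ,
      (Finsupp.single (0 : Fin 2) i + Finsupp.single 1 j ≤ m) ↔ i ≤ m 0 ∧ j ≤ m 1 := by
    intro i j
    rw [Finsupp.le_def]
    constructor
    · intro h
      constructor
      · have := h 0; simpa [Finsupp.single_apply] using this
      · have := h 1; simpa [Finsupp.single_apply] using this
    · rintro ⟨h1, h2⟩ v
      fin_cases v <;> simpa [Finsupp.single_apply]
  have heq : ∀ i j : ℕ,
      (m = Finsupp.single (0 : Fin 2) i + Finsupp.single 1 j) ↔ m 0 = i ∧ m 1 = j := by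
    intro i j
    constructor
    · rintro rfl
      constructor <;> simp [Finsupp.single_apply]
    · rintro ⟨h1, h2⟩
      ext v
      fin_cases v <;> simp [Finsupp.single_apply, ← h1, ← h2]
  have key : ∀ (r : R) (i j : ℕ), (coeff m) (C r * t ^ i * s ^ j * G) =
      if i ≤ m 0 ∧ j ≤ m 1 then r * x (m 0 - i) (m 1 - j) else 0 := by
    intro r i j
    rw [hmon, coeff_monomial_mul]
    by_cases h : i ≤ m 0 ∧ j ≤ m 1
    · rw [if_pos ((hle i j).mpr h), if_pos h]
      congr 1
      show x _ _ = x _ _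
      congr 1 <;> simp [Finsupp.tsub_apply, Finsupp.single_apply]
    · rw [if_neg (fun hh => h ((hle i j).mp hh)), if_neg h]
  have keyC : ∀ (r : R) (i j : ℕ), (coeff m) (C r * t ^ i * s ^ j) =
      if m 0 = i ∧ m 1 = j then r else 0 := by
    intro r i j
    rw [hmon, coeff_monomial]
    by_cases h : m 0 = i ∧ m 1 = j
    · rw [if_pos ((heq i j).mpr h), if_pos h]
    · rw [if_neg (fun hh => h ((heq i j).mp hh)), if_neg h]
  have hL : (1 - C a * t - C b * t ^ 2) * (1 - C c * s - C d * s ^ 2) * G =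
      C 1 * t ^ 0 * s ^ 0 * G - C a * t ^ 1 * s ^ 0 * G - C b * t ^ 2 * s ^ 0 * G
      - C c * t ^ 0 * s ^ 1 * G + C (a * c) * t ^ 1 * s ^ 1 * G
      + C (b * c) * t ^ 2 * s ^ 1 * G - C d * t ^ 0 * s ^ 2 * G
      + C (a * d) * t ^ 1 * s ^ 2 * G + C (b * d) * t ^ 2 * s ^ 2 * G := by
    simp only [map_one, map_mul]
    ring
  have hR : C (x 0 0) * (1 - C a * t) * (1 - C c * s) + C (x 1 0) * t * (1 - C c * s) +
      C (x 0 1) * (1 - C a * t) * s + C (x 1 1) * t * s =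
      C (x 0 0) * t ^ 0 * s ^ 0 - C (x 0 0 * a) * t ^ 1 * s ^ 0 - C (x 0 0 * c) * t ^ 0 * s ^ 1
      + C (x 0 0 * (a * c)) * t ^ 1 * s ^ 1 + C (x 1 0) * t ^ 1 * s ^ 0
      - C (x 1 0 * c) * t ^ 1 * s ^ 1 + C (x 0 1) * t ^ 0 * s ^ 1
      - C (x 0 1 * a) * t ^ 1 * s ^ 1 + C (x 1 1) * t ^ 1 * s ^ 1 := by
    simp only [map_mul]
    ring
  rw [hL, hR]
  simp only [map_add, map_sub, key, keyC]
  generalize m 0 = n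
  generalize m 1 = k
  rcases n with _ | _ | n <;> rcases k with _ | _ | k <;>
    norm_num [Nat.succ_sub_one, show ∀ m : ℕ, m + 1 + 1 - 2 = m from fun _ => rfl]
  · ring
  · linear_combination hV 0 k
  · ring
  · ring
  · linear_combination hV 1 k - a * hV 0 k
  · linear_combination hH n 0
  · linear_combination hH n 1 - c * hH n 0
  · linear_combination hH n (k + 2) - c * hH n (k + 1) - d * hH n k
end

section
/- If a² d = b c², then any double Fibonacci sequence (x_{n,k}) of type (a,b)⊗(c,d) satisfies the diagonal relation ab·x_{n,k+3} + (a²+b)c·x_{n+1,k+2} = a(c²+d)·x_{n+2,k+1} + cd·x_{n+3,k} for all n, k ≥ 0. -/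
/-- diagonal property: if `a²d = bc²`, any four consecutive
diagonal terms of a double Fibonacci sequence of type `(a,b)⊗(c,d)` satisfy
`ab·x_{n,k+3} + (a²+b)c·x_{n+1,k+2} = a(c²+d)·x_{n+2,k+1} + cd·x_{n+3,k}`. -/
theorem double_fib_diagonal (R M : Type*) [CommRing R] [AddCommGroup M]
    [Module R M] (a b c d : R) (h : a ^ 2 * d = b * c ^ 2)
    (x : ℕ → ℕ → M)
    (hH : ∀ n k, x (n + 2) k = a • x (n + 1) k + b • x n k)
    (hV : ∀ n k, x n (k + 2) = c • x n (k + 1) + d • x n k) :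
    ∀ n k, (a * b) • x n (k + 3) + ((a ^ 2 + b) * c) • x (n + 1) (k + 2) =
      (a * (c ^ 2 + d)) • x (n + 2) (k + 1) + (c * d) • x (n + 3) k := by
  intro n k
  have e1 : x n (k + 3) = c • x n (k + 2) + d • x n (k + 1) := hV n (k + 1)
  have e2 : x (n + 3) k = a • x (n + 2) k + b • x (n + 1) k := hH (n + 1) k
  rw [e1, e2, hV n k, hV (n + 1) k, hH n (k + 1), hH n k]
  match_scalars <;> first
    | ring1
    | linear_combination -h
end

section
/- If a = r₁ + r₂, b = −r₁r₂, and r₂ − r₁ is invertible, then every double Fibonacci sequence (x_{n,k}) of type (a,b)⊗(a,b) satisfies x_{n,k} = Δ^{−2}[S₀⁽ⁿ⁾S₀⁽ᵏ⁾·x_{0,0} + S₁⁽ⁿ⁾S₀⁽ᵏ⁾·x_{1,0} + S₀⁽ⁿ⁾S₁⁽ᵏ⁾·x_{0,1} + S₁⁽ⁿ⁾S₁⁽ᵏ⁾·x_{1,1}], where Δ = r₂−r₁, S₀⁽ⁿ⁾ = r₁ⁿr₂ − r₁r₂ⁿ, S₁⁽ⁿ⁾ = r₂ⁿ − r₁ⁿ.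 -/
private lemma one_dim_binet (R : Type*) [CommRing R] (r₁ r₂ : R)
    (y : ℕ → R)
    (h : ∀ n, y (n + 2) = (r₁ + r₂) * y (n + 1) + (-(r₁ * r₂)) * y n) :
    ∀ n, (r₂ - r₁) * y n =
      (r₁ ^ n * r₂ - r₁ * r₂ ^ n) * y 0 + (r₂ ^ n - r₁ ^ n) * y 1 := by
  intro n
  induction n using Nat.twoStepInduction with
  | zero => simp
  | one => simp
  | more n ih1 ih2 =>
    rw [h n]
    have : (r₂ - r₁) * ((r₁ + r₂) * y (n + 1) + -(r₁ * r₂) * y n)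
        = (r₁ + r₂) * ((r₂ - r₁) * y (n + 1)) + (-(r₁ * r₂)) * ((r₂ - r₁) * y n) := by ring
    rw [this, ih2, ih1]
    ring

/-- if `a = r₁ + r₂`, `b = -r₁r₂` and `Δ = r₂ - r₁` is invertible,
the general term of a double Fibonacci sequence of type `(a,b)⊗(a,b)` is
`x_{n,k} = Δ⁻²[S₀ⁿS₀ᵏ x₀₀ + S₁ⁿS₀ᵏ x₁₀ + S₀ⁿS₁ᵏ x₀₁ + S₁ⁿS₁ᵏ x₁₁]`
(stated multiplied through by `Δ²`), where `S₀ⁿ = r₁ⁿr₂ - r₁r₂ⁿ`, `S₁ⁿ = r₂ⁿ - r₁ⁿ`. -/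
theorem double_fib_binet (R : Type*) [CommRing R] (r₁ r₂ : R)
    (hu : IsUnit (r₂ - r₁))
    (x : ℕ → ℕ → R)
    (hH : ∀ n k, x (n + 2) k = (r₁ + r₂) * x (n + 1) k + (-(r₁ * r₂)) * x n k)
    (hV : ∀ n k, x n (k + 2) = (r₁ + r₂) * x n (k + 1) + (-(r₁ * r₂)) * x n k) :
    ∀ n k,
      let S₀ : ℕ → R := fun m => r₁ ^ m * r₂ - r₁ * r₂ ^ m
      let S₁ : ℕ → R := fun m => r₂ ^ m - r₁ ^ m
      (r₂ - r₁) ^ 2 * x n k =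
        S₀ n * S₀ k * x 0 0 + S₁ n * S₀ k * x 1 0 +
        S₀ n * S₁ k * x 0 1 + S₁ n * S₁ k * x 1 1 := by
  intro n k S₀ S₁
  have hn : (r₂ - r₁) * x n k =
      S₀ n * x 0 k + S₁ n * x 1 k :=
    one_dim_binet R r₁ r₂ (fun m => x m k) (fun m => hH m k) n
  have h0 : (r₂ - r₁) * x 0 k = S₀ k * x 0 0 + S₁ k * x 0 1 :=
    one_dim_binet R r₁ r₂ (fun m => x 0 m) (fun m => hV 0 m) k
  have h1 : (r₂ - r₁) * x 1 k = S₀ k * x 1 0 + S₁ k * x 1 1 :=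
    one_dim_binet R r₁ r₂ (fun m => x 1 m) (fun m => hV 1 m) k
  have : (r₂ - r₁) ^ 2 * x n k
      = S₀ n * ((r₂ - r₁) * x 0 k) + S₁ n * ((r₂ - r₁) * x 1 k) := by
    have : (r₂ - r₁) ^ 2 * x n k = (r₂ - r₁) * ((r₂ - r₁) * x n k) := by ring
    rw [this, hn]; ring
  rw [this, h0, h1]; ring
end
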